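/- For ε = 1, the action of V_μ on the odd Hermite polynomial gives the generalized Hermite polynomial expressed via Laguerre polynomials: V_μ H_{2n+1}(x) = (-1)^n (2n+1)! / (μ + 1/2)_{n+1} · x · L_n^{(μ+1/2)}(x²), where V_μ(x^{2k+1}) = [(1/2)_{k+1}/(μ+1/2)_{k+1}] x^{2k+1}. -/

import Mathlib

open Polynomial in
noncomputable def hermiteP : ℕ → Polynomial ℝ
  | 0 => 1
  | 1 => 2 * X
  | (n + 2) => 2 * X * hermiteP (n + 1) - C (2 * ((n : ℝ) + 1)) * hermiteP n

open Polynomial in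
noncomputable def laguerreP (α : ℝ) (n : ℕ) : Polynomial ℝ :=
  C ((ascPochhammer ℝ n).eval (α + 1) / (Nat.factorial n : ℝ)) *
    ∑ k ∈ Finset.range (n + 1),
      C ((ascPochhammer ℝ k).eval (-(n : ℝ))
          / ((ascPochhammer ℝ k).eval (α + 1) * (Nat.factorial k : ℝ))) * X^k

open Finset Polynomial
open scoped Nat

/-!
With `ν = μ + 1/2`, the three-term recurrence gives the classical expansion
`H_{2n+1}(x) = Σ_k (-1)^(n-k) (2n+1)! (2x)^(2k+1) / ((n-k)! (2k+1)!)`, on which `V` acts termwise.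
Since `(1/2)_{k+1} = (2k+1)! / (2^(2k+1) k!)`, the `k`-th term becomes
`(-1)^(n-k) (2n+1)! / ((n-k)! k! (ν)_{k+1}) x^(2k+1)`, and this is the coefficient of `x^(2k+1)` in
`(-1)^n (2n+1)! / (ν)_{n+1} · x L_n^(ν)(x²)` because `(ν)_{m+1} = ν (ν+1)_m` and
`(-n)_k = (-1)^k n! / (n-k)!`.
-/

theorem ascPochhammer_succ_eval_left {S : Type*} [CommSemiring S] (n : ℕ) (x : S) :
    (ascPochhammer S (n + 1)).eval x = x * (ascPochhammer S n).eval (x + 1) := by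
  rw [ascPochhammer_succ_left, eval_mul, eval_X, eval_comp, eval_add, eval_X, eval_one]

theorem ascPochhammer_eval_neg_natCast {R : Type*} [CommRing R] (n k : ℕ) :
    (ascPochhammer R k).eval (-(n : R)) = (-1) ^ k * n.descFactorial k := by
  rw [ascPochhammer_eval_neg_eq_descPochhammer, descPochhammer_eval_eq_descFactorial]

theorem ascPochhammer_eval_ne_zero {R : Type*} [CommRing R] [IsDomain R] {x : R}
    (hx : ∀ j : ℕ, x ≠ -j) (n : ℕ) : (ascPochhammer R n).eval x ≠ 0 := by
  rw [Ne, ascPochhammer_eval_eq_zero_iff]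
  rintro ⟨j, -, hj⟩
  exact hx j (by rw [hj, neg_neg])

theorem ascPochhammer_eval_half_succ {K : Type*} [Field K] [CharZero K] (k : ℕ) :
    (ascPochhammer K (k + 1)).eval (1 / 2) = (2 * k + 1)! / (2 ^ (2 * k + 1) * k !) := by
  induction k with
  | zero => norm_num
  | succ k ih =>
    rw [ascPochhammer_succ_eval, ih, show 2 * (k + 1) + 1 = 2 * k + 1 + 1 + 1 by ring]
    push_cast [Nat.factorial_succ]
    field_simp
    ring

theorem Finset.sum_range_two_mul {M : Type*} [AddCommMonoid M] (f : ℕ → M) (n : ℕ) :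
    ∑ i ∈ range (2 * n), f i = ∑ i ∈ range n, (f (2 * i) + f (2 * i + 1)) := by
  induction n with
  | zero => simp
  | succ n ih =>
    rw [mul_add, mul_one, sum_range_succ, sum_range_succ, sum_range_succ, ih, add_assoc]

theorem hermiteP_add_two (n : ℕ) :
    hermiteP (n + 2) = 2 * X * hermiteP (n + 1) - C (2 * ((n : ℝ) + 1)) * hermiteP n := by
  rw [hermiteP]

theorem coeff_hermiteP_add_two_zero (n : ℕ) :
    (hermiteP (n + 2)).coeff 0 = -(2 * (n + 1)) * (hermiteP n).coeff 0 := by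
  simp [hermiteP_add_two, mul_assoc]

theorem coeff_hermiteP_add_two_succ (n m : ℕ) :
    (hermiteP (n + 2)).coeff (m + 1)
      = 2 * (hermiteP (n + 1)).coeff m - 2 * (n + 1) * (hermiteP n).coeff (m + 1) := by
  rw [hermiteP_add_two, coeff_sub, coeff_C_mul, mul_assoc, coeff_ofNat_mul, coeff_X_mul]

theorem coeff_hermiteP_of_lt {n m : ℕ} (h : n < m) : (hermiteP n).coeff m = 0 := by
  induction n using hermiteP.induct generalizing m with
  | case1 => simp [hermiteP, coeff_one, h.ne']
  | case2 => simp [hermiteP, coeff_X, h.ne]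
  | case3 n ih1 ih0 =>
    obtain ⟨m, rfl⟩ : ∃ m', m = m' + 1 := ⟨m - 1, by omega⟩
    rw [coeff_hermiteP_add_two_succ, ih1 (by omega), ih0 (by omega)]
    ring

theorem coeff_hermiteP_of_odd_add {n m : ℕ} (h : Odd (n + m)) : (hermiteP n).coeff m = 0 := by
  rw [Nat.odd_iff] at h
  induction n using hermiteP.induct generalizing m with
  | case1 => simp [hermiteP, coeff_one, show m ≠ 0 by omega]
  | case2 => simp [hermiteP, coeff_X, show 1 ≠ m by omega]
  | case3 n ih1 ih0 =>
    cases m with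
    | zero => rw [coeff_hermiteP_add_two_zero, ih0 (by omega), mul_zero]
    | succ m => rw [coeff_hermiteP_add_two_succ, ih1 (by omega), ih0 (by omega)]; ring

noncomputable def hermiteCoeff (j m : ℕ) : ℝ := (-1) ^ j * (m + 2 * j)! * 2 ^ m / (j ! * m !)

theorem hermiteCoeff_zero_left (m : ℕ) : hermiteCoeff 0 m = 2 ^ m := by
  simp [hermiteCoeff, Nat.factorial_ne_zero]

theorem hermiteCoeff_succ_zero (j : ℕ) :
    hermiteCoeff (j + 1) 0 = -(2 * (2 * j + 1)) * hermiteCoeff j 0 := by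
  simp only [hermiteCoeff, zero_add, show 2 * (j + 1) = 2 * j + 1 + 1 by ring]
  push_cast [Nat.factorial_succ]
  field_simp
  ring

theorem hermiteCoeff_succ_succ (j m : ℕ) :
    hermiteCoeff (j + 1) (m + 1)
      = 2 * hermiteCoeff (j + 1) m - 2 * (m + 2 * j + 2) * hermiteCoeff j (m + 1) := by
  simp only [hermiteCoeff, show m + 1 + 2 * (j + 1) = m + 2 * j + 1 + 1 + 1 by ring,
    show m + 2 * (j + 1) = m + 2 * j + 1 + 1 by ring, show m + 1 + 2 * j = m + 2 * j + 1 by ring]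
  push_cast [Nat.factorial_succ]
  field_simp
  ring

theorem coeff_hermiteP {N m j : ℕ} (h : m + 2 * j = N) :
    (hermiteP N).coeff m = hermiteCoeff j m := by
  induction N using hermiteP.induct generalizing m j with
  | case1 =>
    obtain ⟨rfl, rfl⟩ : m = 0 ∧ j = 0 := by omega
    simp [hermiteP, hermiteCoeff]
  | case2 =>
    obtain ⟨rfl, rfl⟩ : m = 1 ∧ j = 0 := by omega
    simp [hermiteP, hermiteCoeff]
  | case3 N ih1 ih0 =>
    rcases m with _ | m <;> rcases j with _ | j
    · omega
    · rw [coeff_hermiteP_add_two_zero, ih0 (by omega : 0 + 2 * j = N), hermiteCoeff_succ_zero]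
      obtain rfl : N = 2 * j := by omega
      push_cast; ring
    · rw [coeff_hermiteP_add_two_succ, ih1 (by omega : m + 2 * 0 = N + 1),
        coeff_hermiteP_of_lt (by omega), hermiteCoeff_zero_left, hermiteCoeff_zero_left]
      ring
    · rw [coeff_hermiteP_add_two_succ, ih1 (by omega : m + 2 * (j + 1) = N + 1),
        ih0 (by omega : m + 1 + 2 * j = N), hermiteCoeff_succ_succ]
      obtain rfl : N = m + 1 + 2 * j := by omega
      push_cast; ring

theorem hermiteP_two_mul_add_one (n : ℕ) :
    hermiteP (2 * n + 1)
      = ∑ k ∈ range (n + 1), C (hermiteCoeff (n - k) (2 * k + 1)) * X ^ (2 * k + 1) := by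
  have hdeg : (hermiteP (2 * n + 1)).natDegree < 2 * (n + 1) :=
    (natDegree_le_iff_coeff_eq_zero.mpr fun _ => coeff_hermiteP_of_lt).trans_lt (by omega)
  rw [as_sum_range_C_mul_X_pow' _ hdeg, sum_range_two_mul]
  refine sum_congr rfl fun k hk => ?_
  have hkn : k ≤ n := Nat.lt_succ_iff.mp (mem_range.mp hk)
  rw [coeff_hermiteP_of_odd_add ⟨n + k, by ring⟩, C_0, zero_mul, zero_add,
    coeff_hermiteP (by omega : 2 * k + 1 + 2 * (n - k) = 2 * n + 1)]

noncomputable def laguerreCoeff (α : ℝ) (n k : ℕ) : ℝ :=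
  (ascPochhammer ℝ n).eval (α + 1) / n ! *
    ((ascPochhammer ℝ k).eval (-(n : ℝ)) / ((ascPochhammer ℝ k).eval (α + 1) * k !))

theorem X_mul_laguerreP_comp_X_sq (α : ℝ) (n : ℕ) :
    X * (laguerreP α n).comp (X ^ 2)
      = ∑ k ∈ range (n + 1), C (laguerreCoeff α n k) * X ^ (2 * k + 1) := by
  simp only [laguerreP, laguerreCoeff, mul_comp, Polynomial.sum_comp, C_comp, pow_comp, X_comp,
    mul_sum, C_mul]
  refine sum_congr rfl fun k _ => by ring

theorem hermiteCoeff_mul_eq_laguerreCoeff {ν : ℝ} (hν : ∀ j : ℕ, ν ≠ -j) {n k : ℕ}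
    (hk : k ≤ n) :
    hermiteCoeff (n - k) (2 * k + 1) *
        ((ascPochhammer ℝ (k + 1)).eval (1 / 2) / (ascPochhammer ℝ (k + 1)).eval ν)
      = (-1) ^ n * (2 * n + 1)! / (ascPochhammer ℝ (n + 1)).eval ν * laguerreCoeff ν n k := by
  obtain ⟨j, rfl⟩ := Nat.exists_eq_add_of_le hk
  have hPk := ascPochhammer_eval_ne_zero hν (k + 1)
  have hPn := ascPochhammer_eval_ne_zero hν (k + j + 1)
  rw [ascPochhammer_succ_eval_left, mul_ne_zero_iff] at hPk hPn
  obtain ⟨hν0, hPk⟩ := hPk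
  obtain ⟨-, hPn⟩ := hPn
  have hfact : ((k + j)! : ℝ) = j ! * (k + j).descFactorial k := by
    have := Nat.factorial_mul_descFactorial (Nat.le_add_right k j)
    rw [Nat.add_sub_cancel_left] at this
    exact_mod_cast this.symm
  rw [ascPochhammer_eval_half_succ, ascPochhammer_succ_eval_left, ascPochhammer_succ_eval_left,
    hermiteCoeff, laguerreCoeff, ascPochhammer_eval_neg_natCast, Nat.add_sub_cancel_left,
    show 2 * k + 1 + 2 * j = 2 * (k + j) + 1 by ring, hfact, pow_add (-1 : ℝ) k j]
  rcases neg_one_pow_eq_or ℝ k with hsign | hsign <;> rw [hsign] <;> field_simp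

theorem dunkl_intertwiner_odd_hermite (μ : ℝ) (hμ : ∀ j : ℕ, μ + 1/2 ≠ -(j : ℝ))
    (V : Polynomial ℝ →ₗ[ℝ] Polynomial ℝ)
    (hV : ∀ k : ℕ,
      V (X^(2*k + 1))
        = C ((ascPochhammer ℝ (k + 1)).eval (1/2)
              / (ascPochhammer ℝ (k + 1)).eval (μ + 1/2)) * X^(2*k + 1))
    (n : ℕ) :
    V (hermiteP (2*n + 1))
    = C ((-1)^n * ((2*n + 1).factorial : ℝ)
          / (ascPochhammer ℝ (n + 1)).eval (μ + 1/2))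
        * (X * (laguerreP (μ + 1/2) n).comp (X^2)) := by
  rw [hermiteP_two_mul_add_one, map_sum, X_mul_laguerreP_comp_X_sq, mul_sum]
  refine sum_congr rfl fun k hk => ?_
  rw [← smul_eq_C_mul, map_smul, hV, smul_eq_C_mul, ← mul_assoc, ← mul_assoc, ← C_mul, ← C_mul,
    hermiteCoeff_mul_eq_laguerreCoeff hμ (Nat.lt_succ_iff.mp (mem_range.mp hk))]
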